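/- arXiv:0910.2798 — 5 statements merged into one kernel-verified Lean document; each statement's English description precedes it below -/
import Mathlib

section
/- There are no odd exponential unitary perfect numbers; that is, there is no odd positive integer n satisfying σ^{(e)*}(n) = 2n. -/
/-! `σ^{(e)*}` is multiplicative with `σ^{(e)*}(p^a) = ∑_{b ‖ a} p^b`. For odd `p` and `a ≠ 1` the
unitary divisors of `a` pair off as `b ↔ a/b` without fixed points, so that factor is even. Hence
an odd `n` with `σ^{(e)*}(n) = 2n` has at most one prime `q` whose exponent `a` differs from `1`,
and the equation reduces to `σ^{(e)*}(q^a) = 2q^a`. This is impossible: `b = 1` is the only unitary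
divisor of `a` below `2`, so `σ^{(e)*}(q^a) ≡ q (mod q²)`. -/

open scoped Classical BigOperators

/-- `d` is a unitary divisor of `m`: `d ∣ m` and `gcd (d, m/d) = 1`. -/
def IsUnitaryDivisor (d m : ℕ) : Prop := d ∣ m ∧ Nat.gcd d (m / d) = 1

/-- `ω m` is the number of distinct prime divisors of `m`. -/
def omega (m : ℕ) : ℕ := m.primeFactors.card

/-- `d` is an exponential unitary divisor of `n`: `d` has the same prime factors as `n`
and, at each such prime, the exponent of `d` is a unitary divisor of the exponent of `n`.
By convention `1` is the only e-unitary divisor of `1`. -/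
def IsExpUnitaryDivisor (d n : ℕ) : Prop :=
  0 < d ∧ 0 < n ∧ d.primeFactors = n.primeFactors ∧
    ∀ p ∈ n.primeFactors, IsUnitaryDivisor (d.factorization p) (n.factorization p)

/-- `d` is an exponential divisor of `n`. -/
def IsExpDivisor (d n : ℕ) : Prop :=
  0 < d ∧ 0 < n ∧ d.primeFactors = n.primeFactors ∧
    ∀ p ∈ n.primeFactors, d.factorization p ∣ n.factorization p

/-- the sum of the e-unitary divisors of `n` -/
noncomputable def sigmaEStar (n : ℕ) : ℕ :=
  ∑ d ∈ n.divisors.filter (fun d => IsExpUnitaryDivisor d n), d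

/-- the number of the e-unitary divisors of `n` -/
noncomputable def tauEStar (n : ℕ) : ℕ :=
  (n.divisors.filter (fun d => IsExpUnitaryDivisor d n)).card

/-- the sum of the e-divisors of `n` -/
noncomputable def sigmaE (n : ℕ) : ℕ :=
  ∑ d ∈ n.divisors.filter (fun d => IsExpDivisor d n), d

/-- the number of the e-divisors of `n` -/
noncomputable def tauE (n : ℕ) : ℕ :=
  (n.divisors.filter (fun d => IsExpDivisor d n)).card

/-- the number of unitary divisors of `m` -/
noncomputable def tauStar (m : ℕ) : ℕ :=
  (m.divisors.filter (fun d => IsUnitaryDivisor d m)).card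

/-- the unitary analogue `φ*` of Euler's function: multiplicative with `φ*(p^a) = p^a - 1` -/
def phiStar (m : ℕ) : ℕ := ∏ p ∈ m.primeFactors, (p ^ m.factorization p - 1)

/-- the e-unitary Euler function `φ^{(e)*}` -/
def phiEStar (n : ℕ) : ℕ := ∏ p ∈ n.primeFactors, phiStar (n.factorization p)

/-- the exponential Euler function `φ^{(e)}` -/
def phiE (n : ℕ) : ℕ := ∏ p ∈ n.primeFactors, Nat.totient (n.factorization p)

/-- the exponential unitary analogue of the Möbius function -/
def muEStar (n : ℕ) : ℤ := (-1) ^ (∑ p ∈ n.primeFactors, omega (n.factorization p))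

open Finset

noncomputable def unitaryDivisors (a : ℕ) : Finset ℕ := a.divisors.filter (IsUnitaryDivisor · a)

section UnitaryDivisors

variable {a b : ℕ}

theorem mem_unitaryDivisors : b ∈ unitaryDivisors a ↔ IsUnitaryDivisor b a ∧ a ≠ 0 := by
  rw [unitaryDivisors, mem_filter, Nat.mem_divisors]
  exact ⟨fun ⟨⟨_, ha⟩, h⟩ => ⟨h, ha⟩, fun ⟨h, ha⟩ => ⟨⟨h.1, ha⟩, h⟩⟩

theorem pos_of_mem_unitaryDivisors (hb : b ∈ unitaryDivisors a) : 0 < b := by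
  obtain ⟨⟨hdvd, -⟩, ha⟩ := mem_unitaryDivisors.1 hb
  exact Nat.pos_of_dvd_of_pos hdvd (Nat.pos_of_ne_zero ha)

theorem one_mem_unitaryDivisors (ha : a ≠ 0) : 1 ∈ unitaryDivisors a :=
  mem_unitaryDivisors.2 ⟨⟨one_dvd a, Nat.gcd_one_left _⟩, ha⟩

theorem unitaryDivisors_one : unitaryDivisors 1 = {1} := by
  ext b
  rw [mem_unitaryDivisors, mem_singleton]
  constructor
  · exact fun h => Nat.dvd_one.1 h.1.1
  · rintro rfl
    exact ⟨⟨dvd_rfl, rfl⟩, one_ne_zero⟩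

theorem div_mem_unitaryDivisors (hb : b ∈ unitaryDivisors a) : a / b ∈ unitaryDivisors a := by
  obtain ⟨⟨hdvd, hgcd⟩, ha⟩ := mem_unitaryDivisors.1 hb
  refine mem_unitaryDivisors.2 ⟨⟨Nat.div_dvd_of_dvd hdvd, ?_⟩, ha⟩
  rwa [Nat.div_div_self hdvd ha, Nat.gcd_comm]

theorem IsUnitaryDivisor.div_ne_self (h : IsUnitaryDivisor b a) (ha : a ≠ 1) : a / b ≠ b := by
  intro hb
  have hb1 : b = 1 := by simpa [hb] using h.2
  rw [hb1, Nat.div_one] at hb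
  exact ha hb

end UnitaryDivisors

theorem even_sum_pow_unitaryDivisors {p a : ℕ} (hp : Odd p) (ha : a ≠ 1) :
    Even (∑ b ∈ unitaryDivisors a, p ^ b) := by
  rw [← ZMod.natCast_eq_zero_iff_even]
  push_cast
  rw [ZMod.natCast_eq_one_iff_odd.2 hp]
  simp only [one_pow]
  refine sum_involution (fun b _ => a / b) (fun _ _ => by decide)
    (fun b hb _ => (mem_unitaryDivisors.1 hb).1.div_ne_self ha)
    (fun _ hb => div_mem_unitaryDivisors hb) (fun b hb => ?_)
  obtain ⟨⟨hdvd, -⟩, ha0⟩ := mem_unitaryDivisors.1 hb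
  exact Nat.div_div_self hdvd ha0

theorem sum_pow_unitaryDivisors_modEq (p : ℕ) {a : ℕ} (ha : a ≠ 0) :
    ∑ b ∈ unitaryDivisors a, p ^ b ≡ p [MOD p ^ 2] := by
  rw [← add_sum_erase _ _ (one_mem_unitaryDivisors ha), pow_one]
  conv_rhs => rw [← add_zero p]
  refine Nat.ModEq.add_left _ (Nat.modEq_zero_iff_dvd.2 (dvd_sum fun b hb => ?_))
  obtain ⟨hb1, hb⟩ := mem_erase.1 hb
  have := pos_of_mem_unitaryDivisors hb
  exact pow_dvd_pow p (by omega)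

theorem sum_pow_unitaryDivisors_ne_two_mul_pow {p a : ℕ} (hp : p.Prime) (ha : a ≠ 0) :
    ∑ b ∈ unitaryDivisors a, p ^ b ≠ 2 * p ^ a := by
  intro h
  have hmod : p ≡ 2 * p ^ a [MOD p ^ 2] := h ▸ (sum_pow_unitaryDivisors_modEq p ha).symm
  have hle : p ≤ 2 * p ^ a := le_mul_of_one_le_of_le (by norm_num) (Nat.le_self_pow ha p)
  have hdvd : p ^ 2 ∣ 2 * p ^ a - p := (Nat.modEq_iff_dvd' hle).1 hmod
  have hsq : p ^ 2 ∣ p := by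
    rcases (Nat.one_le_iff_ne_zero.2 ha).eq_or_lt with rfl | ha2
    · simpa [two_mul] using hdvd
    · have h2 : p ^ 2 ∣ 2 * p ^ a := (pow_dvd_pow p ha2).mul_left 2
      simpa [Nat.sub_sub_self hle] using Nat.dvd_sub h2 hdvd
  have := Nat.le_of_dvd hp.pos hsq
  nlinarith [hp.two_le]

theorem Nat.factorization_prod_attach_pow {s : Finset ℕ} (hs : ∀ p ∈ s, p.Prime)
    (e : ∀ p ∈ s, ℕ) :
    (∏ p ∈ s.attach, (p : ℕ) ^ e p p.2).factorization = Finsupp.indicator s e := by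
  rw [← Finsupp.prod_indicator_index_eq_prod_attach (h := (· ^ ·)) e fun _ _ => pow_zero _]
  exact Nat.prod_pow_factorization_eq_self fun p hp =>
    hs p (Finsupp.support_indicator_subset _ _ hp)

theorem IsExpUnitaryDivisor.dvd {d n : ℕ} (h : IsExpUnitaryDivisor d n) : d ∣ n := by
  obtain ⟨hd, hn, hsupp, hexp⟩ := h
  rw [← Nat.factorization_le_iff_dvd hd.ne' hn.ne']
  intro p
  by_cases hp : p ∈ n.primeFactors
  · exact Nat.le_of_dvd (Nat.pos_of_ne_zero (Finsupp.mem_support_iff.1 hp)) (hexp p hp).1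
  · rw [Finsupp.notMem_support_iff.1 (by rwa [Nat.support_factorization, hsupp])]
    exact Nat.zero_le _

theorem sigmaEStar_eq_prod {n : ℕ} (hn : n ≠ 0) :
    sigmaEStar n = ∏ p ∈ n.primeFactors, ∑ b ∈ unitaryDivisors (n.factorization p), p ^ b := by
  have hprime : ∀ p ∈ n.primeFactors, p.Prime := fun _ => Nat.prime_of_mem_primeFactors
  rw [prod_sum, sigmaEStar]
  symm
  refine sum_nbij' (fun g => ∏ p ∈ n.primeFactors.attach, (p : ℕ) ^ g p p.2)
    (fun d p _ => d.factorization p) (fun g hg => ?_) (fun d hd => ?_) (fun g _ => ?_)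
    (fun d hd => ?_) fun _ _ => rfl
  · have hfac := Nat.factorization_prod_attach_pow hprime g
    have hexp : ∀ p (hp : p ∈ n.primeFactors), g p hp ∈ unitaryDivisors (n.factorization p) :=
      mem_pi.1 hg
    have hsupp : (∏ p ∈ n.primeFactors.attach, (p : ℕ) ^ g p p.2).primeFactors
        = n.primeFactors := by
      ext q
      rw [← Nat.support_factorization, hfac, Finsupp.mem_support_iff, Finsupp.indicator_apply]
      by_cases hq : q ∈ n.primeFactors
      · simpa [hq] using (pos_of_mem_unitaryDivisors (hexp q hq)).ne'
      · simp [hq]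
    have he : IsExpUnitaryDivisor (∏ p ∈ n.primeFactors.attach, (p : ℕ) ^ g p p.2) n := by
      refine ⟨prod_pos fun p _ => pow_pos (hprime p p.2).pos _, Nat.pos_of_ne_zero hn,
        hsupp, fun p hp => ?_⟩
      rw [hfac, Finsupp.indicator_of_mem hp]
      exact (mem_unitaryDivisors.1 (hexp p hp)).1
    exact mem_filter.2 ⟨Nat.mem_divisors.2 ⟨he.dvd, hn⟩, he⟩
  · obtain ⟨-, -, -, -, hexp⟩ := mem_filter.1 hd
    exact mem_pi.2 fun p hp =>
      mem_unitaryDivisors.2 ⟨hexp p hp, Finsupp.mem_support_iff.1 hp⟩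
  · funext p hp
    rw [Nat.factorization_prod_attach_pow hprime g, Finsupp.indicator_of_mem hp]
  · obtain ⟨-, hd, -, hsupp, -⟩ := mem_filter.1 hd
    rw [prod_attach n.primeFactors fun p => p ^ d.factorization p, ← hsupp]
    exact (Nat.prod_primeFactors_pow_factorization hd.ne').symm

theorem two_pow_card_dvd_sigmaEStar {n : ℕ} (hn : Odd n) :
    2 ^ #{p ∈ n.primeFactors | n.factorization p ≠ 1} ∣ sigmaEStar n := by
  rw [sigmaEStar_eq_prod hn.pos.ne', ← prod_const]
  refine (prod_dvd_prod_of_dvd _ _ fun p hp => ?_).trans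
    (prod_dvd_prod_of_subset _ _ _ (filter_subset _ _))
  obtain ⟨hp, hp1⟩ := mem_filter.1 hp
  exact even_iff_two_dvd.1 <| even_sum_pow_unitaryDivisors
    (hn.of_dvd_nat (Nat.dvd_of_mem_primeFactors hp)) hp1

theorem sigmaEStar_mul_pow_eq {n q : ℕ} (hq : q ∈ n.primeFactors)
    (hone : ∀ p ∈ n.primeFactors, p ≠ q → n.factorization p = 1) :
    sigmaEStar n * q ^ n.factorization q
      = (∑ b ∈ unitaryDivisors (n.factorization q), q ^ b) * n := by
  have hn : n ≠ 0 := (Nat.mem_primeFactors.1 hq).2.2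
  have hσ : sigmaEStar n = (∑ b ∈ unitaryDivisors (n.factorization q), q ^ b)
      * ∏ p ∈ n.primeFactors.erase q, p := by
    rw [sigmaEStar_eq_prod hn, ← mul_prod_erase _ _ hq]
    refine congrArg _ (prod_congr rfl fun p hp => ?_)
    obtain ⟨hpq, hp⟩ := mem_erase.1 hp
    rw [hone p hp hpq, unitaryDivisors_one, sum_singleton, pow_one]
  have hn' : n = q ^ n.factorization q * ∏ p ∈ n.primeFactors.erase q, p := by
    conv_lhs => rw [Nat.prod_primeFactors_pow_factorization hn, ← mul_prod_erase _ _ hq]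
    refine congrArg _ (prod_congr rfl fun p hp => ?_)
    obtain ⟨hpq, hp⟩ := mem_erase.1 hp
    rw [hone p hp hpq, pow_one]
  rw [hσ, mul_assoc, mul_comm (∏ p ∈ _, p), ← hn']

theorem exists_forall_ne_factorization_eq_one {n : ℕ} (hn : 1 < n)
    (hcard : #{p ∈ n.primeFactors | n.factorization p ≠ 1} ≤ 1) :
    ∃ q ∈ n.primeFactors, ∀ p ∈ n.primeFactors, p ≠ q → n.factorization p = 1 := by
  obtain ⟨q, hq, hmax⟩ :=
    n.primeFactors.exists_max_image n.factorization (Nat.nonempty_primeFactors.2 hn)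
  refine ⟨q, hq, fun p hp hpq => ?_⟩
  by_contra hp1
  have hp0 : n.factorization p ≠ 0 := Finsupp.mem_support_iff.1 hp
  have hq1 : n.factorization q ≠ 1 := by
    have := hmax p hp
    omega
  exact hpq (card_le_one.1 hcard p (mem_filter.2 ⟨hp, hp1⟩) q (mem_filter.2 ⟨hq, hq1⟩))

/-- There are no odd exponential unitary perfect numbers. -/
theorem no_odd_e_unitary_perfect :
    ¬ ∃ n : ℕ, 0 < n ∧ Odd n ∧ sigmaEStar n = 2 * n := by
  rintro ⟨n, hn, hodd, hσ⟩
  have hn1 : 1 < n := by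
    by_contra! h
    obtain rfl : n = 1 := by omega
    simp [sigmaEStar_eq_prod] at hσ
  have hcard : #{p ∈ n.primeFactors | n.factorization p ≠ 1} ≤ 1 := by
    by_contra! h
    have : 4 ∣ 2 * n := (pow_dvd_pow 2 h).trans (hσ ▸ two_pow_card_dvd_sigmaEStar hodd)
    rw [Nat.odd_iff] at hodd
    omega
  obtain ⟨q, hq, hone⟩ := exists_forall_ne_factorization_eq_one hn1 hcard
  have hq0 : n.factorization q ≠ 0 := Finsupp.mem_support_iff.1 hq
  apply sum_pow_unitaryDivisors_ne_two_mul_pow (Nat.prime_of_mem_primeFactors hq) hq0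
  refine Nat.eq_of_mul_eq_mul_right hn ?_
  rw [← sigmaEStar_mul_pow_eq hq hone, hσ]
  ring
end

section
/- The limsup as n → ∞ of (log φ^{(e)*}(n) · log log n) / log n equals (log 4)/5. -/
open scoped Classical BigOperators

/-!
Write `a_p` for the exponent of `p` in `n`, so that `log φ^{(e)*}(n) = ∑_p log φ*(a_p)`.
Since `φ*(a)^5 ≤ 4^a`, with equality at `a = 5`, the prime `p` contributes at most
`(log 4 / 5) a_p`, and also at most `log a_p ≤ log (2 log n)`. The first bound for the primes
`p ≥ (log n)^s`, whose exponents sum to at most `log n / (s log log n)`, and the second for the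
at most `(log n)^s + 1` smaller primes bound the ratio by `log 4 / (5 s) + o(1)`, for every `s < 1`.
Conversely `n = (x#)^5` has `φ^{(e)*}(n) = 4^{π(x)}` and `log n = 5 θ(x)`, and Chebyshev's bounds
`x ≤ 5 θ(x)` and `θ(x) ≤ π(x) log x` show that the ratio is then at least `log 4 / 5`.
-/

open Real Filter Topology Finset Chebyshev

lemma Nat.factorization_pos_of_mem_primeFactors {a p : ℕ} (hp : p ∈ a.primeFactors) :
    0 < a.factorization p :=
  Nat.pos_of_ne_zero <| Finsupp.mem_support_iff.mp (by rwa [Nat.support_factorization])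

lemma Nat.one_lt_pow_factorization_of_mem_primeFactors {a p : ℕ} (hp : p ∈ a.primeFactors) :
    1 < p ^ a.factorization p :=
  Nat.one_lt_pow (Nat.factorization_pos_of_mem_primeFactors hp).ne'
    (Nat.prime_of_mem_primeFactors hp).one_lt

lemma phiStar_pos (a : ℕ) : 0 < phiStar a :=
  prod_pos fun _ hp => Nat.sub_pos_of_lt (Nat.one_lt_pow_factorization_of_mem_primeFactors hp)

lemma phiStar_lt_self {a : ℕ} (ha : 2 ≤ a) : phiStar a < a := by
  conv_rhs => rw [Nat.prod_primeFactors_pow_factorization (by omega : a ≠ 0)]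
  obtain ⟨p, hp⟩ := Nat.nonempty_primeFactors.2 (by omega : 1 < a)
  have hpow := Nat.one_lt_pow_factorization_of_mem_primeFactors hp
  exact prod_lt_prod
    (fun _ hq => Nat.sub_pos_of_lt (Nat.one_lt_pow_factorization_of_mem_primeFactors hq))
    (fun _ _ => Nat.sub_le _ _) ⟨p, hp, Nat.sub_lt (by omega) one_pos⟩

lemma phiStar_le_self {a : ℕ} (ha : a ≠ 0) : phiStar a ≤ a := by
  rcases eq_or_ne a 1 with rfl | ha1
  · simp [phiStar]
  · exact (phiStar_lt_self (by omega)).le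

lemma pow_five_le_four_pow_succ (b : ℕ) : b ^ 5 ≤ 4 ^ (b + 1) := by
  rcases Nat.lt_or_ge b 4 with hb | hb
  · interval_cases b <;> norm_num
  induction b, hb using Nat.le_induction with
  | base => norm_num
  | succ b hb ih =>
    have hsucc : (b + 1) ^ 5 ≤ 4 * b ^ 5 := by
      obtain ⟨c, rfl⟩ := Nat.exists_eq_add_of_le' hb
      ring_nf
      linarith [Nat.zero_le (c ^ 5), Nat.zero_le (c ^ 4), Nat.zero_le (c ^ 3), Nat.zero_le (c ^ 2)]
    rw [pow_succ _ (b + 1)]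
    omega

lemma phiStar_pow_five_le (a : ℕ) : phiStar a ^ 5 ≤ 4 ^ a := by
  rcases Nat.lt_or_ge a 2 with ha | ha
  · interval_cases a <;> simp [phiStar]
  · have hlt := phiStar_lt_self ha
    calc phiStar a ^ 5 ≤ (a - 1) ^ 5 := Nat.pow_le_pow_left (by omega) 5
      _ ≤ 4 ^ (a - 1 + 1) := pow_five_le_four_pow_succ _
      _ = 4 ^ a := by rw [Nat.sub_add_cancel (by omega)]

lemma log_phiStar_le_mul (a : ℕ) : log (phiStar a) ≤ log 4 / 5 * a := by
  have h : log ((phiStar a : ℝ) ^ 5) ≤ log ((4 : ℝ) ^ a) :=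
    log_le_log (by have := phiStar_pos a; positivity) (mod_cast phiStar_pow_five_le a)
  rw [log_pow, log_pow] at h
  push_cast at h
  linarith

lemma log_phiStar_le_log (a : ℕ) : log (phiStar a) ≤ log a := by
  rcases eq_or_ne a 0 with rfl | ha
  · simp [phiStar]
  · exact log_le_log (mod_cast phiStar_pos a) (mod_cast phiStar_le_self ha)

lemma log_phiEStar (n : ℕ) :
    log (phiEStar n) = ∑ p ∈ n.primeFactors, log (phiStar (n.factorization p)) := by
  rw [phiEStar, Nat.cast_prod, log_prod]
  exact fun _ _ => mod_cast (phiStar_pos _).ne'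

lemma log_natCast_eq_sum_primeFactors (n : ℕ) :
    log n = ∑ p ∈ n.primeFactors, n.factorization p * log p := by
  rw [log_nat_eq_sum_factorization, Finsupp.sum, Nat.support_factorization]

lemma sum_log_phiStar_filter_le_le {n : ℕ} {y : ℝ} (hy : 1 < y) :
    ∑ p ∈ n.primeFactors with y ≤ (p : ℕ), log (phiStar (n.factorization p)) ≤
      log 4 / 5 * (log n / log y) := by
  have hlogy : 0 < log y := log_pos hy
  have hexp :
      ∑ p ∈ n.primeFactors with y ≤ (p : ℕ), (n.factorization p : ℝ) ≤ log n / log y := by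
    rw [le_div_iff₀ hlogy, sum_mul, log_natCast_eq_sum_primeFactors n]
    calc ∑ p ∈ n.primeFactors with y ≤ (p : ℕ), (n.factorization p : ℝ) * log y
        ≤ ∑ p ∈ n.primeFactors with y ≤ (p : ℕ), (n.factorization p : ℝ) * log p := by
          refine sum_le_sum fun p hp => ?_
          gcongr
          exact (mem_filter.1 hp).2
      _ ≤ ∑ p ∈ n.primeFactors, (n.factorization p : ℝ) * log p :=
          sum_le_sum_of_subset_of_nonneg (filter_subset _ _) fun p _ _ => by positivity
  calc ∑ p ∈ n.primeFactors with y ≤ (p : ℕ), log (phiStar (n.factorization p))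
      ≤ ∑ p ∈ n.primeFactors with y ≤ (p : ℕ), log 4 / 5 * (n.factorization p : ℝ) :=
        sum_le_sum fun _ _ => log_phiStar_le_mul _
    _ ≤ log 4 / 5 * (log n / log y) := by
        rw [← mul_sum]
        gcongr

lemma factorization_le_two_mul_log {n p : ℕ} (hp : p ∈ n.primeFactors) :
    (n.factorization p : ℝ) ≤ 2 * log n := by
  have h2p : log 2 ≤ log p :=
    log_le_log two_pos (mod_cast (Nat.prime_of_mem_primeFactors hp).two_le)
  have hle : (n.factorization p : ℝ) * log p ≤ log n := by
    rw [log_natCast_eq_sum_primeFactors n]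
    exact single_le_sum (f := fun q => (n.factorization q : ℝ) * log q)
      (fun q _ => by positivity) hp
  nlinarith [Real.log_two_gt_d9, (n.factorization p).cast_nonneg (α := ℝ)]

lemma sum_log_phiStar_filter_not_le_le {n : ℕ} (hn : 2 ≤ n) {y : ℝ} (hy : 0 ≤ y) :
    ∑ p ∈ n.primeFactors with ¬ y ≤ (p : ℕ), log (phiStar (n.factorization p)) ≤
      (y + 1) * log (2 * log n) := by
  have hcard : (#{p ∈ n.primeFactors | ¬ y ≤ (p : ℕ)} : ℝ) ≤ y + 1 := by
    have hsub : {p ∈ n.primeFactors | ¬ y ≤ (p : ℕ)} ⊆ range ⌈y⌉₊ := fun p hp =>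
      mem_range.2 (Nat.lt_ceil.2 (not_le.1 (mem_filter.1 hp).2))
    calc (#{p ∈ n.primeFactors | ¬ y ≤ (p : ℕ)} : ℝ) ≤ ⌈y⌉₊ := by
          exact_mod_cast (card_le_card hsub).trans_eq (card_range _)
      _ ≤ y + 1 := (Nat.ceil_lt_add_one hy).le
  calc ∑ p ∈ n.primeFactors with ¬ y ≤ (p : ℕ), log (phiStar (n.factorization p))
      ≤ ∑ p ∈ n.primeFactors with ¬ y ≤ (p : ℕ), log (2 * log n) := by
        refine sum_le_sum fun p hp => (log_phiStar_le_log _).trans ?_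
        have hp := (mem_filter.1 hp).1
        exact log_le_log (mod_cast Nat.factorization_pos_of_mem_primeFactors hp)
          (factorization_le_two_mul_log hp)
    _ ≤ (y + 1) * log (2 * log n) := by
        rw [sum_const, nsmul_eq_mul]
        gcongr
        have h2n : log 2 ≤ log n := log_le_log two_pos (mod_cast hn)
        exact log_nonneg (by linarith [Real.log_two_gt_d9])

lemma log_phiEStar_le {n : ℕ} (hn : 2 ≤ n) {y : ℝ} (hy : 1 < y) :
    log (phiEStar n) ≤ log 4 / 5 * (log n / log y) + (y + 1) * log (2 * log n) := by
  rw [log_phiEStar, ← sum_filter_add_sum_filter_not _ (fun p : ℕ => y ≤ p)]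
  exact add_le_add (sum_log_phiStar_filter_le_le hy)
    (sum_log_phiStar_filter_not_le_le hn (by linarith))

lemma tendsto_rpow_add_one_mul_log_mul_log_div_atTop {s : ℝ} (hs0 : 0 ≤ s) (hs1 : s < 1) :
    Tendsto (fun t => (t ^ s + 1) * log (2 * t) * log t / t) atTop (𝓝 0) := by
  have hlim : Tendsto (fun t => 4 * (log t ^ 2 / t ^ (1 - s))) atTop (𝓝 0) := by
    simpa using
      ((isLittleO_log_rpow_rpow_atTop 2 (sub_pos.2 hs1)).tendsto_div_nhds_zero).const_mul 4
  refine squeeze_zero' ?_ ?_ hlim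
  · filter_upwards [eventually_ge_atTop 1] with t ht
    have := log_nonneg ht
    have := log_nonneg (by linarith : (1 : ℝ) ≤ 2 * t)
    positivity
  · filter_upwards [eventually_ge_atTop 2] with t ht
    have ht0 : 0 < t := by linarith
    have hpow : 1 ≤ t ^ s := one_le_rpow (by linarith) hs0
    have hlog : log (2 * t) ≤ 2 * log t := by
      rw [log_mul two_ne_zero ht0.ne']
      linarith [log_le_log two_pos ht]
    have hlog0 : 0 ≤ log t := log_nonneg (by linarith)
    calc (t ^ s + 1) * log (2 * t) * log t / t ≤ (2 * t ^ s) * (2 * log t) * log t / t := by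
          gcongr
          · exact log_nonneg (by linarith)
          · linarith
      _ = 4 * (log t ^ 2 / t ^ (1 - s)) := by
          rw [rpow_sub ht0, rpow_one]
          field_simp
          ring

lemma eventually_log_phiEStar_mul_log_log_div_log_le {ε : ℝ} (hε : 0 < ε) :
    ∀ᶠ n : ℕ in atTop, log (phiEStar n) * log (log n) / log n ≤ log 4 / 5 + ε := by
  set c := log 4 / 5
  have hc : 0 < c := by have := log_pos (by norm_num : (1 : ℝ) < 4); positivity
  -- splitting the primes at `(log n) ^ s` costs the factor `c / s = c + ε / 2`
  set s := c / (c + ε / 2)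
  have hs0 : 0 < s := by positivity
  have hs1 : s < 1 := (div_lt_one (by positivity)).2 (by linarith)
  have hlog : Tendsto (fun n : ℕ => log n) atTop atTop :=
    tendsto_log_atTop.comp tendsto_natCast_atTop_atTop
  have herr := hlog.eventually <|
    (tendsto_rpow_add_one_mul_log_mul_log_div_atTop hs0.le hs1).eventually
      (ge_mem_nhds (half_pos hε))
  filter_upwards [eventually_ge_atTop 2, hlog.eventually_gt_atTop 1, herr] with n hn hL herr
  set L := log (n : ℝ)
  have hL0 : 0 < L := by linarith
  have hLL : 0 < log L := log_pos hL
  have hy : log (L ^ s) = s * log L := log_rpow hL0 s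
  calc log (phiEStar n) * log L / L
      ≤ (c * (L / log (L ^ s)) + (L ^ s + 1) * log (2 * L)) * log L / L := by
        gcongr
        exact log_phiEStar_le hn (one_lt_rpow hL hs0)
    _ = c / s + (L ^ s + 1) * log (2 * L) * log L / L := by
        rw [hy]
        field_simp
    _ ≤ c + ε := by
        rw [div_div_cancel₀ hc.ne']
        linarith

lemma phiStar_five : phiStar 5 = 4 := by
  simp [phiStar, Nat.prime_five.primeFactors, Nat.prime_five.factorization]

lemma phiEStar_primorial_pow_five (x : ℕ) :
    phiEStar (primorial x ^ 5) = 4 ^ Nat.primeCounting x := by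
  have hfact : ∀ p ∈ Nat.primesLE x, (primorial x ^ 5).factorization p = 5 := fun p hp => by
    obtain ⟨hpx, hp⟩ := Nat.mem_primesLE.1 hp
    rw [Nat.factorization_pow, Finsupp.smul_apply, Nat.factorization_eq_one_of_squarefree
      (squarefree_primorial x) hp (hp.dvd_primorial_iff.2 hpx), smul_eq_mul, mul_one]
  rw [phiEStar, Nat.primeFactors_pow _ (by norm_num), primeFactors_primorial,
    prod_congr rfl fun p hp => by rw [hfact p hp, phiStar_five], prod_const,
    Nat.primesLE_card_eq_primeCounting]

lemma log_primorial_pow_five (x : ℕ) : log (primorial x ^ 5 : ℕ) = 5 * θ x := by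
  rw [theta_eq_log_primorial, Nat.floor_natCast]
  push_cast
  rw [log_pow]
  norm_num

lemma eventually_le_five_mul_theta : ∀ᶠ x : ℕ in atTop, (x : ℝ) ≤ 5 * θ x := by
  have hk : 0 < (log 2 - 1 / 5) / 3 := by linarith [Real.log_two_gt_d9]
  filter_upwards [tendsto_natCast_atTop_atTop.eventually
      ((isLittleO_log_rpow_atTop one_half_pos).bound hk),
    tendsto_natCast_atTop_atTop.eventually_ge_atTop (4 : ℝ)] with x hsqrt hx
  rw [norm_of_nonneg (log_nonneg (by linarith)), norm_of_nonneg (by positivity),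
    ← sqrt_eq_rpow] at hsqrt
  have h2 : 2 ≤ √(x : ℝ) := (le_sqrt zero_le_two (by linarith)).2 (by linarith)
  have hlog : log ((x : ℝ) + 1) ≤ 2 * log x := by
    calc log ((x : ℝ) + 1) ≤ log ((x : ℝ) ^ 2) := log_le_log (by linarith) (by nlinarith)
      _ = 2 * log x := by rw [log_pow]; norm_num
  have hsq := mul_self_sqrt (by linarith : (0 : ℝ) ≤ x)
  nlinarith [theta_ge x, log_nonneg (by linarith : (1 : ℝ) ≤ x)]

lemma eventually_le_log_phiEStar_mul_log_log_div_log_primorial_pow_five :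
    ∀ᶠ x : ℕ in atTop, log 4 / 5 ≤
      log (phiEStar (primorial x ^ 5)) * log (log (primorial x ^ 5 : ℕ)) /
        log (primorial x ^ 5 : ℕ) := by
  filter_upwards [eventually_le_five_mul_theta, eventually_ge_atTop 2] with x hθx hx
  have hx1 : (1 : ℝ) < x := by exact_mod_cast hx
  have hθ : 0 < θ x := by linarith
  have hπ : θ x ≤ Nat.primeCounting x * log x := theta_le_pi_mul_log x
  have hlog : log x ≤ log (5 * θ x) := log_le_log (by linarith) hθx
  rw [phiEStar_primorial_pow_five, log_primorial_pow_five, Nat.cast_pow, log_pow]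
  calc log 4 / 5 = log 4 / 5 * (θ x / θ x) := by rw [div_self hθ.ne', mul_one]
    _ ≤ log 4 / 5 * (Nat.primeCounting x * log (5 * θ x) / θ x) := by
        gcongr
        exact hπ.trans (by gcongr)
    _ = _ := by field_simp; push_cast; ring

lemma tendsto_primorial_pow_five : Tendsto (fun x => primorial x ^ 5) atTop atTop :=
  tendsto_atTop_mono (fun _ => le_primorial_self.trans (Nat.le_self_pow (by norm_num) _))
    tendsto_id

lemma Filter.limsup_eq_of_forall_eventually_le_of_frequently_ge {α : Type*} {l : Filter α}
    {f : α → ℝ} {c : ℝ} (hle : ∀ ε > 0, ∀ᶠ a in l, f a ≤ c + ε) (hge : ∃ᶠ a in l, c ≤ f a) :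
    limsup f l = c := by
  have hcobdd : IsCoboundedUnder (· ≤ ·) l f := .of_frequently_ge hge
  refine le_antisymm (le_of_forall_pos_le_add fun ε hε => limsup_le_of_le hcobdd (hle ε hε)) ?_
  exact le_limsup_of_frequently_le hge (isBoundedUnder_of_eventually_le (hle 1 one_pos))

/-- The maximal order of `φ^{(e)*}`:
`limsup (log φ^{(e)*}(n) · log log n) / log n = (log 4)/5`. -/
theorem phiEStar_limsup :
    Filter.limsup
      (fun n : ℕ => Real.log (phiEStar n) * Real.log (Real.log n) / Real.log n)
      Filter.atTop = Real.log 4 / 5 :=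
  limsup_eq_of_forall_eventually_le_of_frequently_ge
    (fun _ hε => eventually_log_phiEStar_mul_log_log_div_log_le hε)
    (tendsto_primorial_pow_five.frequently
      eventually_le_log_phiEStar_mul_log_log_div_log_primorial_pow_five.frequently)
end

section
/- There exists an arithmetic function w whose Dirichlet series W(s) = Σ_{n≥1} w(n)/n^s converges absolutely for Re s > 1/4, such that for all s with Re s > 1, Σ_{n=1}^∞ μ^{(e)*}(n)/n^s = ζ(s)/ζ(2s)² · W(s). -/
open scoped Classical BigOperators

/-!
At a prime `p` we have `μ^{(e)*}(p^a) = (-1)^{ω(a)}`, so with `x = p^{-s}` the Euler factor of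
`∑ μ^{(e)*}(n) n^{-s}` is `U(x) = ∑ₐ (-1)^{ω(a)} xᵃ = 1 + x - x² - x³ + O(x⁴)`, while that of
`ζ(s)/ζ(2s)²` is `(1 - x²)²/(1 - x) = (1 + x)²(1 - x) = 1 + x - x² - x³`. Hence the quotient
`V = U/((1 + X)²(1 - X))` is `1 + O(X⁴)`, and since `1/(1 + X)` and `1/(1 - X)` have bounded
coefficients, those of `V` grow at most like `a³`. The multiplicative `w` with `w(pᵃ) = [Xᵃ] V`
therefore has `∑_p ∑_{a ≥ 1} |w(pᵃ)| p^{-aσ} ≪ ∑_p p^{-4σ}`, finite for `σ > 1/4`; for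
`Re s > 1` the identity is the equality of the Euler products.
-/

open PowerSeries Finset

section FactorizationProd

variable {M : Type*} [CommMonoid M]

/-- The multiplicative function with `pᵏ ↦ g k`; its value at `0` is `1`. -/
def factorizationProd (g : ℕ → M) (n : ℕ) : M := n.factorization.prod fun _ k => g k

lemma factorizationProd_one (g : ℕ → M) : factorizationProd g 1 = 1 := by
  simp [factorizationProd]

lemma factorizationProd_mul (g : ℕ → M) {m n : ℕ} (h : m.Coprime n) :
    factorizationProd g (m * n) = factorizationProd g m * factorizationProd g n := by
  rw [factorizationProd, Nat.factorization_mul_of_coprime h,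
    Finsupp.prod_add_index_of_disjoint (by simpa using h.disjoint_primeFactors)]
  rfl

lemma factorizationProd_prime_pow {g : ℕ → M} (hg : g 0 = 1) {p : ℕ} (hp : p.Prime) (e : ℕ) :
    factorizationProd g (p ^ e) = g e := by
  rw [factorizationProd, hp.factorization_pow, Finsupp.prod_single_index hg]

end FactorizationProd

theorem summable_of_multiplicative_of_summable_tail {f : ℕ → ℝ} (hf0 : f 0 = 0) (hf1 : f 1 = 1)
    (hnn : ∀ n, 0 ≤ f n) (hmul : ∀ {m n : ℕ}, m.Coprime n → f (m * n) = f m * f n)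
    (hloc : ∀ {p : ℕ}, p.Prime → Summable fun e => f (p ^ e))
    (htail : Summable fun p : Nat.Primes => ∑' e, f (p ^ (e + 1))) : Summable f := by
  refine summable_of_sum_le (c := Real.exp (∑' p : Nat.Primes, ∑' e, f (p ^ (e + 1)))) hnn
    fun u => ?_
  set S := u.biUnion Nat.primeFactors
  obtain ⟨hsumS, hhasS⟩ :=
    EulerProduct.summable_and_hasSum_factoredNumbers_prod_filter_prime_tsum hf1 hmul
      (fun hp => by simpa [abs_of_nonneg (hnn _)] using hloc hp) S
  have htail_nonneg (p : ℕ) : 0 ≤ ∑' e, f (p ^ (e + 1)) := tsum_nonneg fun e => hnn _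
  calc ∑ n ∈ u, f n = ∑ m ∈ u.subtype (· ∈ Nat.factoredNumbers S), f m := by
        rw [sum_subtype_eq_sum_filter, sum_filter_of_ne]
        intro n hn hfn
        exact Nat.mem_factoredNumbers_of_primeFactors_subset (by rintro rfl; exact hfn hf0)
          (subset_biUnion_of_mem _ hn)
    _ ≤ ∑' m : Nat.factoredNumbers S, f m := hsumS.of_norm.sum_le_tsum _ fun m _ => hnn m
    _ = ∏ p ∈ S with p.Prime, (1 + ∑' e, f (p ^ (e + 1))) := by
        rw [hhasS.tsum_eq]
        refine prod_congr rfl fun p hp => ?_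
        rw [(hloc (mem_filter.1 hp).2).tsum_eq_zero_add, pow_zero, hf1]
    _ ≤ Real.exp (∑ p ∈ S with p.Prime, ∑' e, f (p ^ (e + 1))) :=
        Real.prod_one_add_le_exp_sum _ htail_nonneg
    _ ≤ Real.exp (∑' p : Nat.Primes, ∑' e, f (p ^ (e + 1))) := by
        rw [Real.exp_le_exp, ← sum_subtype_eq_sum_filter]
        exact htail.sum_le_tsum (ι := Nat.Primes) _ fun p _ => htail_nonneg p

section DirichletSeries

variable {g : ℕ → ℂ} {s : ℂ}

lemma factorizationProd_div_cpow_eq (hs : s ≠ 0) (g : ℕ → ℂ) (n : ℕ) :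
    factorizationProd g n / (n : ℂ) ^ s = factorizationProd g n * riemannZetaSummandHom hs n := by
  rw [div_eq_mul_inv, ← Complex.cpow_neg]
  rfl

lemma factorizationProd_div_cpow_mul (hs : s ≠ 0) (g : ℕ → ℂ) {m n : ℕ} (h : m.Coprime n) :
    factorizationProd g (m * n) / ((m * n : ℕ) : ℂ) ^ s =
      factorizationProd g m / (m : ℂ) ^ s * (factorizationProd g n / (n : ℂ) ^ s) := by
  rw [factorizationProd_div_cpow_eq hs g (m * n), factorizationProd_div_cpow_eq hs g m,
    factorizationProd_div_cpow_eq hs g n, factorizationProd_mul g h, map_mul]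
  ring

lemma factorizationProd_div_cpow_prime_pow (hs : s ≠ 0) (hg : g 0 = 1) {p : ℕ} (hp : p.Prime)
    (e : ℕ) : factorizationProd g (p ^ e) / ((p ^ e : ℕ) : ℂ) ^ s = g e * ((p : ℂ) ^ (-s)) ^ e := by
  rw [factorizationProd_div_cpow_eq hs, factorizationProd_prime_pow hg hp, map_pow]
  rfl

theorem hasProd_factorizationProd_div_cpow (hg : g 0 = 1) (hs : s ≠ 0)
    (hsum : Summable fun n : ℕ => ‖factorizationProd g n / (n : ℂ) ^ s‖) :
    HasProd (fun p : Nat.Primes => ∑' e, g e * ((p : ℂ) ^ (-s)) ^ e)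
      (∑' n : ℕ, factorizationProd g n / (n : ℂ) ^ s) := by
  have hfactor (p : Nat.Primes) : ∑' e, g e * ((p : ℂ) ^ (-s)) ^ e =
      ∑' e, factorizationProd g (p ^ e) / ((p ^ e : ℕ) : ℂ) ^ s :=
    tsum_congr fun e => (factorizationProd_div_cpow_prime_pow hs hg p.2 e).symm
  simp only [hfactor]
  exact EulerProduct.eulerProduct_hasProd (by simp [factorizationProd_one])
    (factorizationProd_div_cpow_mul hs g) hsum (by simp [Complex.zero_cpow hs])

theorem summable_norm_factorizationProd_div_cpow (hg : g 0 = 1) (hs : s ≠ 0)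
    (hloc : ∀ {p : ℕ}, p.Prime → Summable fun e => ‖g e‖ * ((p : ℝ) ^ (-s.re)) ^ e)
    (htail : Summable fun p : Nat.Primes =>
      ∑' e, ‖g (e + 1)‖ * ((p : ℝ) ^ (-s.re)) ^ (e + 1)) :
    Summable fun n : ℕ => ‖factorizationProd g n / (n : ℂ) ^ s‖ := by
  have hprime_pow {p : ℕ} (hp : p.Prime) (e : ℕ) :
      ‖factorizationProd g (p ^ e) / ((p ^ e : ℕ) : ℂ) ^ s‖ = ‖g e‖ * ((p : ℝ) ^ (-s.re)) ^ e := by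
    rw [factorizationProd_div_cpow_prime_pow hs hg hp, norm_mul, norm_pow,
      Complex.norm_natCast_cpow_of_pos hp.pos, Complex.neg_re]
  refine summable_of_multiplicative_of_summable_tail (by simp [Complex.zero_cpow hs])
    (by simp [factorizationProd_one]) (fun n => norm_nonneg _)
    (fun h => by rw [factorizationProd_div_cpow_mul hs g h, norm_mul])
    (fun hp => (hloc hp).congr fun e => (hprime_pow hp e).symm) ?_
  exact htail.congr fun p => tsum_congr fun e => (hprime_pow p.2 (e + 1)).symm

end DirichletSeries

section CoeffBounds

variable {R : Type*}

lemma norm_coeff_mul_le_choose [NormedRing R] {A B : R⟦X⟧} {k : ℕ}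
    (hA : ∀ n, ‖coeff n A‖ ≤ (n + k).choose k) (hB : ∀ n, ‖coeff n B‖ ≤ 1) (n : ℕ) :
    ‖coeff n (A * B)‖ ≤ (n + (k + 1)).choose (k + 1) := by
  rw [coeff_mul]
  calc ‖∑ ij ∈ antidiagonal n, coeff ij.1 A * coeff ij.2 B‖
      ≤ ∑ ij ∈ antidiagonal n, ((ij.1 + k).choose k : ℝ) := by
        refine (norm_sum_le _ _).trans (sum_le_sum fun ij _ => (norm_mul_le _ _).trans ?_)
        simpa using mul_le_mul (hA ij.1) (hB ij.2) (norm_nonneg _) (Nat.cast_nonneg _)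
    _ = (n + (k + 1)).choose (k + 1) := by
        rw [Nat.sum_antidiagonal_eq_sum_range_succ_mk, ← add_assoc]
        exact_mod_cast Nat.sum_range_add_choose n k

lemma summable_norm_coeff_mul_geometric [NormedRing R] {A : R⟦X⟧} {k : ℕ}
    (hA : ∀ n, ‖coeff n A‖ ≤ (n + k).choose k) {r : ℝ} (hr0 : 0 ≤ r) (hr1 : r < 1) :
    Summable fun n => ‖coeff n A‖ * r ^ n :=
  (summable_choose_mul_geometric_of_norm_lt_one k
    (by rwa [Real.norm_of_nonneg hr0])).of_nonneg_of_le (fun n => by positivity)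
    fun n => mul_le_mul_of_nonneg_right (hA n) (by positivity)

lemma summable_norm_coeff_mul_pow [NormedRing R] [NormOneClass R] {A : R⟦X⟧} {k : ℕ}
    (hA : ∀ n, ‖coeff n A‖ ≤ (n + k).choose k) {x : R} (hx : ‖x‖ < 1) :
    Summable fun n => ‖coeff n A * x ^ n‖ :=
  (summable_norm_coeff_mul_geometric hA (norm_nonneg x) hx).of_nonneg_of_le (fun _ => norm_nonneg _)
    fun _ => (norm_mul_le _ _).trans (mul_le_mul_of_nonneg_left (norm_pow_le _ _) (norm_nonneg _))

lemma tsum_coeff_mul_mul_pow [NormedCommRing R] [CompleteSpace R] {A B : R⟦X⟧} {x : R}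
    (hA : Summable fun n => ‖coeff n A * x ^ n‖) (hB : Summable fun n => ‖coeff n B * x ^ n‖) :
    ∑' n, coeff n (A * B) * x ^ n = (∑' n, coeff n A * x ^ n) * ∑' n, coeff n B * x ^ n := by
  rw [tsum_mul_tsum_eq_tsum_sum_antidiagonal_of_summable_norm hA hB]
  refine tsum_congr fun n => ?_
  rw [coeff_mul, sum_mul]
  refine sum_congr rfl fun ij hij => ?_
  rw [← mem_antidiagonal.1 hij, pow_add]
  ring

lemma exists_tsum_norm_coeff_succ_mul_pow_le [NormedRing R] {V : R⟦X⟧} {k d : ℕ}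
    (hV : X ^ k ∣ V - 1) (hbound : ∀ n, ‖coeff n V‖ ≤ (n + d).choose d) {ρ : ℝ} (hρ0 : 0 < ρ)
    (hρ1 : ρ < 1) :
    ∃ C, ∀ r, 0 ≤ r → r ≤ ρ → ∑' e, ‖coeff (e + 1) V‖ * r ^ (e + 1) ≤ C * r ^ k := by
  set G : ℕ → ℝ := fun n => (n + d).choose d * ρ ^ n
  have hG : Summable G :=
    summable_choose_mul_geometric_of_norm_lt_one d (by rwa [Real.norm_of_nonneg hρ0.le])
  refine ⟨(ρ ^ k)⁻¹ * ∑' n, G n, fun r hr0 hrρ => ?_⟩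
  have hterm (n : ℕ) (hn : n ≠ 0) : ‖coeff n V‖ * r ^ n ≤ (ρ ^ k)⁻¹ * G n * r ^ k := by
    rcases lt_or_ge n k with hnk | hkn
    · have : coeff n V = 0 := by simpa [hn] using X_pow_dvd_iff.1 hV n hnk
      rw [this, norm_zero, zero_mul]
      positivity
    · calc ‖coeff n V‖ * r ^ n = ‖coeff n V‖ * (r ^ k * r ^ (n - k)) := by
            rw [← pow_add, Nat.add_sub_cancel' hkn]
        _ ≤ (n + d).choose d * (r ^ k * ρ ^ (n - k)) := by gcongr; exact hbound n
        _ = (ρ ^ k)⁻¹ * G n * r ^ k := by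
            rw [pow_sub₀ _ hρ0.ne' hkn]
            ring
  have hshift : Summable fun e => G (e + 1) := (summable_nat_add_iff 1).mpr hG
  calc ∑' e, ‖coeff (e + 1) V‖ * r ^ (e + 1) ≤ ∑' e, (ρ ^ k)⁻¹ * G (e + 1) * r ^ k :=
        Summable.tsum_le_tsum (fun e => hterm _ e.succ_ne_zero)
          ((summable_nat_add_iff 1).mpr
            (summable_norm_coeff_mul_geometric hbound hr0 (hrρ.trans_lt hρ1)))
          ((hshift.mul_left _).mul_right _)
    _ = (ρ ^ k)⁻¹ * (∑' e, G (e + 1)) * r ^ k := by rw [tsum_mul_right, tsum_mul_left]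
    _ ≤ (ρ ^ k)⁻¹ * (∑' n, G n) * r ^ k := by
        refine mul_le_mul_of_nonneg_right (mul_le_mul_of_nonneg_left ?_ (by positivity))
          (by positivity)
        rw [hG.tsum_eq_zero_add]
        exact le_add_of_nonneg_left (by positivity)

end CoeffBounds

noncomputable def invOneAddX : ℂ⟦X⟧ := PowerSeries.mk fun n => (-1) ^ n

lemma invOneAddX_mul_one_add_X : invOneAddX * (1 + X) = 1 := by
  ext (_ | n) <;> simp [invOneAddX, mul_add, coeff_succ_mul_X, pow_succ]

lemma norm_coeff_invOneAddX_le (n : ℕ) : ‖coeff n invOneAddX‖ ≤ (n + 0).choose 0 := by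
  simp [invOneAddX]

lemma tsum_coeff_invOneAddX_mul_pow {x : ℂ} (hx : ‖x‖ < 1) :
    ∑' n, coeff n invOneAddX * x ^ n = (1 + x)⁻¹ := by
  simp only [invOneAddX, coeff_mk, ← mul_pow, neg_one_mul,
    tsum_geometric_of_norm_lt_one (by rwa [norm_neg] : ‖-x‖ < 1), sub_neg_eq_add]

noncomputable def muEStarLocal : ℂ⟦X⟧ := PowerSeries.mk fun a => (-1) ^ omega a

/-- `1/((1 + X)²(1 - X))`, the Euler factor of `ζ(2s)²/ζ(s)` in `x = p^{-s}`. -/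
noncomputable def zetaRatioLocal : ℂ⟦X⟧ := invOneAddX * invOneAddX * PowerSeries.mk 1

noncomputable def wLocal : ℂ⟦X⟧ := zetaRatioLocal * muEStarLocal

noncomputable def muEStarW : ℕ → ℂ := factorizationProd fun a => coeff a wLocal

lemma muEStar_eq_factorizationProd (n : ℕ) :
    (muEStar n : ℂ) = factorizationProd (fun a => coeff a muEStarLocal) n := by
  simp only [muEStar, factorizationProd, Finsupp.prod, Nat.support_factorization, muEStarLocal,
    coeff_mk, prod_pow_eq_pow_sum]
  push_cast
  rfl

lemma zetaRatioLocal_mul : zetaRatioLocal * ((1 + X) ^ 2 * (1 - X)) = 1 := by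
  calc zetaRatioLocal * ((1 + X) ^ 2 * (1 - X))
      = (invOneAddX * (1 + X)) * (invOneAddX * (1 + X)) * (PowerSeries.mk 1 * (1 - X)) := by
        rw [zetaRatioLocal]; ring
    _ = 1 := by rw [invOneAddX_mul_one_add_X, mk_one_mul_one_sub_eq_one, one_mul, one_mul]

lemma X_pow_four_dvd_muEStarLocal_sub : X ^ 4 ∣ muEStarLocal - (1 + X) ^ 2 * (1 - X) := by
  rw [show ((1 + X) ^ 2 * (1 - X) : ℂ⟦X⟧) = 1 + X - X ^ 2 - X ^ 3 by ring, X_pow_dvd_iff]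
  intro m hm
  interval_cases m <;>
    simp [muEStarLocal, omega, coeff_X, coeff_X_pow, Nat.prime_two.primeFactors,
      Nat.prime_three.primeFactors]

lemma X_pow_four_dvd_wLocal_sub_one : X ^ 4 ∣ wLocal - 1 := by
  rw [← zetaRatioLocal_mul, wLocal, ← mul_sub]
  exact X_pow_four_dvd_muEStarLocal_sub.mul_left _

lemma coeff_zero_wLocal : coeff 0 wLocal = 1 := by
  simpa [sub_eq_zero] using X_pow_dvd_iff.1 X_pow_four_dvd_wLocal_sub_one 0 (by norm_num)

lemma norm_coeff_invOneAddX_sq_le (n : ℕ) :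
    ‖coeff n (invOneAddX * invOneAddX)‖ ≤ (n + 1).choose 1 :=
  norm_coeff_mul_le_choose norm_coeff_invOneAddX_le (fun n => by simp [invOneAddX]) n

lemma norm_coeff_zetaRatioLocal_le (n : ℕ) : ‖coeff n zetaRatioLocal‖ ≤ (n + 2).choose 2 :=
  norm_coeff_mul_le_choose norm_coeff_invOneAddX_sq_le (fun n => by simp) n

lemma norm_coeff_wLocal_le (n : ℕ) : ‖coeff n wLocal‖ ≤ (n + 3).choose 3 :=
  norm_coeff_mul_le_choose norm_coeff_zetaRatioLocal_le (fun n => by simp [muEStarLocal]) n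

lemma tsum_coeff_zetaRatioLocal_mul_pow {x : ℂ} (hx : ‖x‖ < 1) :
    ∑' n, coeff n zetaRatioLocal * x ^ n = ((1 + x) ^ 2 * (1 - x))⁻¹ := by
  have hA := summable_norm_coeff_mul_pow norm_coeff_invOneAddX_le hx
  rw [zetaRatioLocal, tsum_coeff_mul_mul_pow
      (summable_norm_coeff_mul_pow norm_coeff_invOneAddX_sq_le hx)
      (summable_norm_coeff_mul_pow (k := 0) (fun n => by simp) hx),
    tsum_coeff_mul_mul_pow hA hA, tsum_coeff_invOneAddX_mul_pow hx]
  simp only [coeff_mk, Pi.one_apply, one_mul, tsum_geometric_of_norm_lt_one hx]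
  rw [mul_inv, sq, mul_inv]

lemma tsum_coeff_wLocal_mul_pow {x : ℂ} (hx : ‖x‖ < 1) :
    ∑' n, coeff n wLocal * x ^ n =
      ((1 + x) ^ 2 * (1 - x))⁻¹ * ∑' n, coeff n muEStarLocal * x ^ n := by
  rw [wLocal, tsum_coeff_mul_mul_pow (summable_norm_coeff_mul_pow norm_coeff_zetaRatioLocal_le hx)
    (summable_norm_coeff_mul_pow (k := 0) (fun n => by simp [muEStarLocal]) hx),
    tsum_coeff_zetaRatioLocal_mul_pow hx]

theorem summable_norm_muEStarW_div_cpow {s : ℂ} (hs : 1 / 4 < s.re) :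
    Summable fun n : ℕ => ‖muEStarW n / (n : ℂ) ^ s‖ := by
  have hs0 : s ≠ 0 := fun h => by simp [h] at hs; linarith
  have hr0 (p : ℕ) : 0 ≤ (p : ℝ) ^ (-s.re) := by positivity
  have hr2 {p : ℕ} (hp : p.Prime) : (p : ℝ) ^ (-s.re) ≤ 2 ^ (-s.re) :=
    Real.rpow_le_rpow_of_nonpos two_pos (by exact_mod_cast hp.two_le) (by linarith)
  have h2 : (2 : ℝ) ^ (-s.re) < 1 := Real.rpow_lt_one_of_one_lt_of_neg one_lt_two (by linarith)
  obtain ⟨C, hC⟩ := exists_tsum_norm_coeff_succ_mul_pow_le X_pow_four_dvd_wLocal_sub_one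
    norm_coeff_wLocal_le (by positivity) h2
  refine summable_norm_factorizationProd_div_cpow coeff_zero_wLocal hs0
    (fun hp =>
      summable_norm_coeff_mul_geometric norm_coeff_wLocal_le (hr0 _) ((hr2 hp).trans_lt h2))
    (Summable.of_nonneg_of_le (fun p => tsum_nonneg fun e => by positivity)
      (fun p => hC _ (hr0 p) (hr2 p.2)) ?_)
  have hsum : Summable fun n : ℕ => C * ((n : ℝ) ^ (-s.re)) ^ 4 := by
    refine ((Real.summable_nat_rpow.mpr (by linarith : -s.re * 4 < -1)).mul_left C).congr
      fun n => ?_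
    rw [← Real.rpow_mul_natCast (Nat.cast_nonneg _), Nat.cast_ofNat]
  exact hsum.comp_injective Subtype.val_injective

lemma eulerFactor_muEStar_eq {x : ℂ} (hx : ‖x‖ < 1) :
    (∑' e, coeff e muEStarLocal * x ^ e) * ((1 - x ^ 2)⁻¹ * (1 - x ^ 2)⁻¹) =
      (1 - x)⁻¹ * ∑' e, coeff e wLocal * x ^ e := by
  have h1 : 1 + x ≠ 0 := fun h => by simp [eq_neg_of_add_eq_zero_right h] at hx
  have h2 : 1 - x ≠ 0 := fun h => by simp [(sub_eq_zero.1 h).symm] at hx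
  rw [tsum_coeff_wLocal_mul_pow hx, show 1 - x ^ 2 = (1 + x) * (1 - x) by ring]
  field_simp

theorem tsum_muEStar_div_cpow {s : ℂ} (hs : 1 < s.re) :
    ∑' n : ℕ, (muEStar n : ℂ) / (n : ℂ) ^ s =
      riemannZeta s / riemannZeta (2 * s) ^ 2 * ∑' n : ℕ, muEStarW n / (n : ℂ) ^ s := by
  have hs0 := Complex.ne_zero_of_one_lt_re hs
  have hs2 : 1 < (2 * s).re := by simp; linarith
  have hμ : Summable fun n : ℕ => ‖(muEStar n : ℂ) / (n : ℂ) ^ s‖ :=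
    (summable_riemannZetaSummand hs).congr fun n => by
      simp [muEStar, riemannZetaSummandHom, Complex.cpow_neg]
  simp only [muEStar_eq_factorizationProd] at hμ ⊢
  have hlocal (p : Nat.Primes) :
      (∑' e, coeff e muEStarLocal * ((p : ℂ) ^ (-s)) ^ e) *
          ((1 - (p : ℂ) ^ (-(2 * s)))⁻¹ * (1 - (p : ℂ) ^ (-(2 * s)))⁻¹) =
        (1 - (p : ℂ) ^ (-s))⁻¹ * ∑' e, coeff e wLocal * ((p : ℂ) ^ (-s)) ^ e := by
    have hp : (p : ℂ) ≠ 0 := by exact_mod_cast p.2.ne_zero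
    rw [show (p : ℂ) ^ (-(2 * s)) = ((p : ℂ) ^ (-s)) ^ 2 by
      rw [sq, ← Complex.cpow_add _ _ hp]; ring_nf]
    refine eulerFactor_muEStar_eq ?_
    rw [Complex.norm_natCast_cpow_of_pos p.2.pos, Complex.neg_re]
    exact Real.rpow_lt_one_of_one_lt_of_neg (by exact_mod_cast p.2.one_lt) (by linarith)
  have hprod := (hasProd_factorizationProd_div_cpow (by simp [muEStarLocal, omega]) hs0 hμ).mul
    ((riemannZeta_eulerProduct_hasProd hs2).mul (riemannZeta_eulerProduct_hasProd hs2))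
  simp only [hlocal] at hprod
  have key := hprod.unique ((riemannZeta_eulerProduct_hasProd hs).mul
    (hasProd_factorizationProd_div_cpow coeff_zero_wLocal hs0
      (summable_norm_muEStarW_div_cpow (by linarith))))
  rw [div_mul_eq_mul_div, eq_div_iff (pow_ne_zero 2 (riemannZeta_ne_zero_of_one_lt_re hs2)), sq,
    key, muEStarW]

/-- The Dirichlet series of `μ^{(e)*}` is `ζ(s)/ζ(2s)² · W(s)` where `W` converges
absolutely for `Re s > 1/4`. -/
theorem muEStar_dirichlet_series :
    ∃ w : ℕ → ℂ,
      (∀ s : ℂ, 1 / 4 < s.re → Summable (fun n : ℕ => ‖w n / (n : ℂ) ^ s‖)) ∧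
      ∀ s : ℂ, 1 < s.re →
        ∑' n : ℕ, (muEStar n : ℂ) / (n : ℂ) ^ s =
          riemannZeta s / (riemannZeta (2 * s)) ^ 2 * ∑' n : ℕ, w n / (n : ℂ) ^ s :=
  ⟨muEStarW, fun _ hs => summable_norm_muEStarW_div_cpow hs, fun _ hs => tsum_muEStar_div_cpow hs⟩
end

section
/- Σ_{n ≤ x} φ^{(e)}(n)/φ^{(e)*}(n) = x · Π_p (1 + Σ_{a=4}^∞ (φ(a)/φ^*(a) − φ(a−1)/φ^*(a−1)) / p^a) + O(x^{1/4} log x), where φ is Euler's totient function, φ^* is multiplicative with φ^*(p^a) = p^a − 1, and the product is over all primes p. -/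
open scoped Classical BigOperators

/-!
Let `r(a) = φ(a)/φ*(a)`. Then `φ^{(e)}(n)/φ^{(e)*}(n) = ∑_{d ∣ n} h(d)` for the multiplicative `h`
with `h(p^a) = r(a) - r(a-1)`. As `r(1) = r(2) = r(3) = 1`, `h` lives on `4`-full numbers, and
`|h| ≤ 1` because `0 ≤ r ≤ 1`. Hence
`∑_{n ≤ x} φ^{(e)}(n)/φ^{(e)*}(n) - x ∑_d h(d)/d = ∑_d h(d) (⌊x/d⌋ - x/d)`
is bounded by `∑_{d 4-full} min(1, x/d)`, and `∑_d h(d)/d` is the Euler product of the statement.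
Writing a `4`-full `d` as `a^4 b^5 c^6 e^7`, the sum over `a` of `min(1, y/a^4)` is at most
`3 y^{1/4}`, while `∑ (b^5 c^6 e^7)^{-1/4}` converges; so the error is even `O(x^{1/4})`.
-/

open Finset

namespace ArithmeticFunction

variable {R : Type*} [CommMonoidWithZero R]

def ofExponents (F : ℕ → R) : ArithmeticFunction R :=
  ⟨fun n => if n = 0 then 0 else n.factorization.prod fun _ k => F k, if_pos rfl⟩

theorem ofExponents_apply (F : ℕ → R) {n : ℕ} (hn : n ≠ 0) :
    ofExponents F n = ∏ p ∈ n.primeFactors, F (n.factorization p) := by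
  simp [ofExponents, hn, Finsupp.prod]

theorem isMultiplicative_ofExponents (F : ℕ → R) : (ofExponents F).IsMultiplicative := by
  refine ⟨by simp [ofExponents], fun {m n} hmn => ?_⟩
  rcases eq_or_ne m 0 with rfl | hm
  · simp
  rcases eq_or_ne n 0 with rfl | hn
  · simp
  simp only [ofExponents, coe_mk, mul_ne_zero hm hn, hm, hn, if_false, Nat.factorization_mul hm hn]
  exact Finsupp.prod_add_index_of_disjoint (by simpa using hmn.disjoint_primeFactors) _

theorem ofExponents_apply_prime_pow (F : ℕ → R) {p k : ℕ} (hp : p.Prime) (hk : k ≠ 0) :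
    ofExponents F (p ^ k) = F k := by
  rw [ofExponents_apply F (pow_ne_zero _ hp.ne_zero), Nat.primeFactors_prime_pow hk hp,
    prod_singleton, hp.factorization_pow, Finsupp.single_eq_same]

end ArithmeticFunction

open ArithmeticFunction
open scoped ArithmeticFunction.zeta

theorem Nat.factorization_ne_zero_of_mem_primeFactors {a p : ℕ} (hp : p ∈ a.primeFactors) :
    a.factorization p ≠ 0 :=
  Finsupp.mem_support_iff.1 (a.support_factorization ▸ hp)

theorem totient_le_phiStar (a : ℕ) : Nat.totient a ≤ phiStar a := by
  rcases eq_or_ne a 0 with rfl | ha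
  · simp
  rw [Nat.totient_eq_prod_factorization ha, Finsupp.prod, Nat.support_factorization, phiStar]
  refine prod_le_prod' fun p hp => ?_
  obtain ⟨k, hk⟩ :=
    Nat.exists_eq_add_one_of_ne_zero (Nat.factorization_ne_zero_of_mem_primeFactors hp)
  rw [hk, Nat.add_sub_cancel, pow_succ, Nat.mul_sub, mul_one]
  exact Nat.sub_le_sub_left (Nat.one_le_pow _ _ (Nat.prime_of_mem_primeFactors hp).pos) _

noncomputable def phiRatio (k : ℕ) : ℝ := Nat.totient k / phiStar k

theorem phiRatio_nonneg (k : ℕ) : 0 ≤ phiRatio k := by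
  unfold phiRatio; positivity

theorem phiRatio_le_one (k : ℕ) : phiRatio k ≤ 1 :=
  div_le_one_of_le₀ (mod_cast totient_le_phiStar k) (Nat.cast_nonneg _)

theorem phiRatio_one : phiRatio 1 = 1 := by
  simp [phiRatio, phiStar]

theorem phiRatio_prime {p : ℕ} (hp : p.Prime) : phiRatio p = 1 := by
  rw [phiRatio, phiStar, hp.primeFactors, prod_singleton, hp.factorization_self, pow_one,
    Nat.totient_prime hp, div_self (Nat.cast_ne_zero.2 (Nat.sub_ne_zero_of_lt hp.one_lt))]

theorem ofExponents_phiRatio_apply {n : ℕ} (hn : n ≠ 0) :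
    ofExponents phiRatio n = phiE n / phiEStar n := by
  rw [ofExponents_apply _ hn, phiE, phiEStar]
  push_cast
  rw [← prod_div_distrib]
  rfl

/-- `h (p ^ k)` for `h = μ * (φ^{(e)} / φ^{(e)*})`. This is `phiRatio k - phiRatio (k - 1)` for
`k ≥ 2` (and `0` for `k = 2, 3`); at `k = 1` the predecessor is the value `1` at `p ^ 0`, not
the junk `phiRatio 0 = 0`. -/
noncomputable def phiRatioJump (k : ℕ) : ℝ := if k < 4 then 0 else phiRatio k - phiRatio (k - 1)

theorem abs_phiRatioJump_le_one (k : ℕ) : |phiRatioJump k| ≤ 1 := by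
  unfold phiRatioJump
  split_ifs
  · simp
  · have := phiRatio_nonneg k; have := phiRatio_le_one k
    have := phiRatio_nonneg (k - 1); have := phiRatio_le_one (k - 1)
    rw [abs_le]; constructor <;> linarith

theorem one_add_sum_phiRatioJump {k : ℕ} (hk : k ≠ 0) :
    1 + ∑ i ∈ range k, phiRatioJump (i + 1) = phiRatio k := by
  induction k with
  | zero => contradiction
  | succ k ih =>
    rcases eq_or_ne k 0 with rfl | hk0
    · simp [phiRatioJump, phiRatio_one]
    rw [sum_range_succ, ← add_assoc, ih hk0, phiRatioJump]
    split_ifs with h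
    · obtain rfl | rfl : k = 1 ∨ k = 2 := by omega
      · rw [phiRatio_one, phiRatio_prime Nat.prime_two]; ring
      · rw [phiRatio_prime Nat.prime_two, phiRatio_prime Nat.prime_three]; ring
    · rw [Nat.add_sub_cancel]; ring

theorem ofExponents_phiRatioJump_mul_zeta :
    ofExponents phiRatioJump * (ζ : ArithmeticFunction ℝ) = ofExponents phiRatio := by
  have hmul : (ofExponents phiRatioJump * (ζ : ArithmeticFunction ℝ)).IsMultiplicative :=
    (isMultiplicative_ofExponents _).mul isMultiplicative_zeta.natCast
  refine (hmul.eq_iff_eq_on_prime_powers _ _ (isMultiplicative_ofExponents _)).2 fun p k hp => ?_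
  rcases eq_or_ne k 0 with rfl | hk
  · rw [pow_zero, hmul.map_one, (isMultiplicative_ofExponents _).map_one]
  rw [mul_comm, coe_zeta_mul_apply, Nat.sum_divisors_prime_pow hp, sum_range_succ', pow_zero,
    (isMultiplicative_ofExponents _).map_one, add_comm,
    ofExponents_apply_prime_pow _ hp hk, ← one_add_sum_phiRatioJump hk]
  congr 1
  exact sum_congr rfl fun i _ => ofExponents_apply_prime_pow _ hp i.succ_ne_zero

theorem abs_ofExponents_phiRatioJump_le_one (n : ℕ) : |ofExponents phiRatioJump n| ≤ 1 := by
  rcases eq_or_ne n 0 with rfl | hn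
  · simp
  rw [ofExponents_apply _ hn, abs_prod]
  exact prod_le_one (fun _ _ => abs_nonneg _) fun _ _ => abs_phiRatioJump_le_one _

theorem four_le_factorization_of_ofExponents_phiRatioJump_ne_zero {n : ℕ}
    (h : ofExponents phiRatioJump n ≠ 0) : ∀ p ∈ n.primeFactors, 4 ≤ n.factorization p := by
  intro p hp
  have hn : n ≠ 0 := by rintro rfl; simp at h
  rw [ofExponents_apply _ hn] at h
  by_contra hlt
  exact h (prod_eq_zero hp (if_pos (not_le.1 hlt)))

/-- Every `4`-full number is `a ^ 4 * fourFullCore w` for some `a` and `w`. -/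
def fourFullCore (w : ℕ × ℕ × ℕ) : ℕ := w.1 ^ 5 * w.2.1 ^ 6 * w.2.2 ^ 7

theorem fourFullCore_mul (w w' : ℕ × ℕ × ℕ) :
    fourFullCore (w * w') = fourFullCore w * fourFullCore w' := by
  simp only [fourFullCore, Prod.fst_mul, Prod.snd_mul, mul_pow]
  ring

theorem exists_pow_four_mul_fourFullCore_eq_pow {p k : ℕ} (hk : 4 ≤ k) :
    ∃ a w, a ^ 4 * fourFullCore w = p ^ k := by
  obtain ⟨i, j, hj, rfl⟩ : ∃ i j, j < 4 ∧ k = 4 * i + j + 4 :=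
    ⟨k / 4 - 1, k % 4, by omega, by omega⟩
  interval_cases j
  · exact ⟨p ^ (i + 1), (1, 1, 1), by simp [fourFullCore]; ring⟩
  · exact ⟨p ^ i, (p, 1, 1), by simp [fourFullCore]; ring⟩
  · exact ⟨p ^ i, (1, p, 1), by simp [fourFullCore]; ring⟩
  · exact ⟨p ^ i, (1, 1, p), by simp [fourFullCore]; ring⟩

theorem exists_pow_four_mul_fourFullCore_eq {n : ℕ}
    (hn : ∀ p ∈ n.primeFactors, 4 ≤ n.factorization p) : ∃ a w, a ^ 4 * fourFullCore w = n := by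
  rcases eq_or_ne n 0 with rfl | hn0
  · exact ⟨0, 1, by simp⟩
  rw [← Nat.prod_factorization_pow_eq_self hn0, Finsupp.prod, Nat.support_factorization]
  refine prod_induction _ (fun m => ∃ a w, a ^ 4 * fourFullCore w = m) ?_
    ⟨1, 1, by simp [fourFullCore]⟩ fun p hp => exists_pow_four_mul_fourFullCore_eq_pow (hn p hp)
  rintro _ _ ⟨a, w, rfl⟩ ⟨a', w', rfl⟩
  exact ⟨a * a', w * w', by rw [fourFullCore_mul]; ring⟩

theorem abs_natFloor_sub_le_min {t : ℝ} (ht : 0 ≤ t) : |(⌊t⌋₊ : ℝ) - t| ≤ min 1 t := by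
  have h1 := Nat.floor_le ht
  have h2 := Nat.lt_floor_add_one t
  have h3 : (0 : ℝ) ≤ ⌊t⌋₊ := Nat.cast_nonneg _
  rw [abs_sub_comm, abs_of_nonneg (by linarith), le_min_iff]
  constructor <;> linarith

theorem one_div_pow_four_le_two_mul_sub {k : ℝ} (hk : 1 ≤ k) :
    1 / k ^ 4 ≤ 2 * (1 / k ^ 3 - 1 / (k + 1) ^ 3) := by
  have hk0 : 0 < k := by linarith
  rw [div_sub_div _ _ (by positivity) (by positivity), mul_div_assoc',
    div_le_div_iff₀ (by positivity) (by positivity)]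
  nlinarith [pow_pos hk0 3, pow_pos hk0 4, pow_pos hk0 5, pow_pos hk0 6]

theorem sum_range_one_div_add_pow_four_le {m : ℝ} (hm : 1 ≤ m) (n : ℕ) :
    ∑ i ∈ range n, 1 / ((i : ℝ) + m) ^ 4 ≤ 2 / m ^ 3 := by
  calc ∑ i ∈ range n, 1 / ((i : ℝ) + m) ^ 4
      ≤ ∑ i ∈ range n, 2 * (1 / ((i : ℝ) + m) ^ 3 - 1 / (((i + 1 : ℕ) : ℝ) + m) ^ 3) := by
        refine sum_le_sum fun i _ => ?_
        rw [Nat.cast_succ, add_right_comm]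
        exact one_div_pow_four_le_two_mul_sub (le_add_of_nonneg_of_le i.cast_nonneg hm)
    _ = 2 * (1 / m ^ 3 - 1 / ((n : ℝ) + m) ^ 3) := by
        rw [← mul_sum, sum_range_sub' (fun i : ℕ => 1 / ((i : ℝ) + m) ^ 3), Nat.cast_zero, zero_add]
    _ ≤ 2 / m ^ 3 := by
        have : 0 ≤ 1 / ((n : ℝ) + m) ^ 3 := by positivity
        rw [mul_sub, mul_one_div]
        linarith

theorem summable_min_one_div_pow_four (t : ℝ) : Summable fun a : ℕ => min 1 ((t / a) ^ 4) := by
  refine Summable.of_nonneg_of_le (fun a => le_min zero_le_one (by positivity))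
    (fun a => min_le_right _ _) ?_
  simp_rw [div_pow, div_eq_mul_one_div (t ^ 4)]
  exact (Real.summable_one_div_nat_pow.2 (by norm_num)).mul_left _

/-- Split at `a = ⌊t⌋₊`: at most `t` terms are `≤ 1`, and the rest is a tail of `∑ t^4/a^4`. -/
theorem tsum_min_one_div_pow_four_le {t : ℝ} (ht : 0 ≤ t) :
    ∑' a : ℕ, min 1 ((t / a) ^ 4) ≤ 3 * t := by
  set f : ℕ → ℝ := fun a => min 1 ((t / a) ^ 4)
  set A := ⌊t⌋₊
  have hf0 : ∀ a, 0 ≤ f a := fun a => le_min zero_le_one (by positivity)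
  have hA : (A : ℝ) ≤ t := Nat.floor_le ht
  have hm : t < (A + 1 : ℕ) := by push_cast; exact Nat.lt_floor_add_one t
  have hhead : ∑ i ∈ range (A + 1), f i ≤ t := by
    rw [sum_range_succ']
    have : ∑ i ∈ range A, f (i + 1) ≤ ∑ i ∈ range A, (1 : ℝ) :=
      sum_le_sum fun i _ => min_le_left _ _
    simp only [sum_const, card_range, nsmul_eq_mul, mul_one] at this
    have hf_zero : f 0 = 0 := by simp [f]
    linarith
  have htail : ∑' i, f (i + (A + 1)) ≤ 2 * t := by
    refine Real.tsum_le_of_sum_range_le (fun i => hf0 _) fun n => ?_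
    set m : ℝ := ((A + 1 : ℕ) : ℝ)
    calc ∑ i ∈ range n, f (i + (A + 1))
        ≤ ∑ i ∈ range n, t ^ 4 * (1 / ((i : ℝ) + m) ^ 4) := by
          refine sum_le_sum fun i _ => (min_le_right _ _).trans_eq ?_
          rw [div_pow, Nat.cast_add]
          ring
      _ ≤ t ^ 4 * (2 / m ^ 3) := by
          rw [← mul_sum]
          exact mul_le_mul_of_nonneg_left
            (sum_range_one_div_add_pow_four_le (by simp [m]) n) (by positivity)
      _ ≤ 2 * t := by
          have hm0 : 0 < m := by positivity
          have : t ^ 3 ≤ m ^ 3 := pow_le_pow_left₀ ht hm.le 3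
          rw [mul_div_assoc', div_le_iff₀ (by positivity)]
          nlinarith
  rw [← Summable.sum_add_tsum_nat_add (A + 1) (summable_min_one_div_pow_four t)]
  linarith

theorem summable_fourFullCore_rpow :
    Summable fun w : ℕ × ℕ × ℕ => (fourFullCore w : ℝ) ^ (-(1 / 4 : ℝ)) := by
  have hpow (b k : ℕ) : ((b : ℝ) ^ k) ^ (-(1 / 4 : ℝ)) = (b : ℝ) ^ (-(k / 4 : ℝ)) := by
    rw [← Real.rpow_natCast_mul (Nat.cast_nonneg b)]
    ring_nf
  have hser {s : ℝ} (hs : s < -1) : Summable fun n : ℕ => (n : ℝ) ^ s := Real.summable_nat_rpow.2 hs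
  have key : Summable fun w : ℕ × ℕ × ℕ =>
      (w.1 : ℝ) ^ (-(5 / 4 : ℝ)) * ((w.2.1 : ℝ) ^ (-(6 / 4 : ℝ)) * (w.2.2 : ℝ) ^ (-(7 / 4 : ℝ))) :=
    (hser (by norm_num)).mul_of_nonneg
      ((hser (by norm_num)).mul_of_nonneg (hser (by norm_num))
        (fun _ => by positivity) fun _ => by positivity)
      (fun _ => by positivity) fun _ => by positivity
  refine key.congr fun w => ?_
  simp only [fourFullCore, Nat.cast_mul, Nat.cast_pow]
  rw [Real.mul_rpow (by positivity) (by positivity), Real.mul_rpow (by positivity) (by positivity),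
    hpow, hpow, hpow]
  push_cast
  ring

theorem min_one_div_pow_four_mul_fourFullCore {x : ℝ} (hx : 0 ≤ x) (w : ℕ × ℕ × ℕ) (a : ℕ) :
    min 1 (x / ((a ^ 4 * fourFullCore w : ℕ) : ℝ)) =
      min 1 (((x / fourFullCore w) ^ (1 / 4 : ℝ) / a) ^ 4) := by
  rw [div_pow, one_div, ← Real.rpow_natCast, ← Real.rpow_mul (by positivity)]
  norm_num [div_div, mul_comm]

theorem tsum_min_one_div_pow_four_mul_fourFullCore_le_rpow {x : ℝ} (hx : 0 ≤ x)
    (w : ℕ × ℕ × ℕ) :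
    ∑' a : ℕ, min 1 (x / ((a ^ 4 * fourFullCore w : ℕ) : ℝ)) ≤
      3 * x ^ (1 / 4 : ℝ) * (fourFullCore w : ℝ) ^ (-(1 / 4 : ℝ)) := by
  simp_rw [min_one_div_pow_four_mul_fourFullCore hx w]
  refine (tsum_min_one_div_pow_four_le (by positivity)).trans_eq ?_
  rw [Real.div_rpow hx (Nat.cast_nonneg _), Real.rpow_neg (Nat.cast_nonneg _)]
  ring

/-- Pairs with a zero entry contribute `min 1 (x / 0) = 0`. -/
theorem summable_min_one_div_pow_four_mul_fourFullCore {x : ℝ} (hx : 0 ≤ x) :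
    Summable fun q : (ℕ × ℕ × ℕ) × ℕ => min 1 (x / ((q.2 ^ 4 * fourFullCore q.1 : ℕ) : ℝ)) := by
  refine (summable_prod_of_nonneg fun _ => le_min zero_le_one (by positivity)).2
    ⟨fun w => ?_, ?_⟩
  · simp_rw [min_one_div_pow_four_mul_fourFullCore hx w]
    exact summable_min_one_div_pow_four _
  · exact (summable_fourFullCore_rpow.mul_left (3 * x ^ (1 / 4 : ℝ))).of_nonneg_of_le
      (fun _ => tsum_nonneg fun _ => le_min zero_le_one (by positivity))
      (tsum_min_one_div_pow_four_mul_fourFullCore_le_rpow hx)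

theorem tsum_min_one_div_pow_four_mul_fourFullCore_le {x : ℝ} (hx : 0 ≤ x) :
    ∑' q : (ℕ × ℕ × ℕ) × ℕ, min 1 (x / ((q.2 ^ 4 * fourFullCore q.1 : ℕ) : ℝ)) ≤
      3 * x ^ (1 / 4 : ℝ) * ∑' w, (fourFullCore w : ℝ) ^ (-(1 / 4 : ℝ)) := by
  have hsum := summable_min_one_div_pow_four_mul_fourFullCore hx
  have hfib := ((summable_prod_of_nonneg fun _ => le_min zero_le_one (by positivity)).1 hsum).1
  rw [hsum.tsum_prod' hfib, ← tsum_mul_left]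
  exact hsum.prod.tsum_le_tsum (tsum_min_one_div_pow_four_mul_fourFullCore_le_rpow hx)
    (summable_fourFullCore_rpow.mul_left _)

theorem summable_and_tsum_le_of_support_subset_range {ι κ : Type*} {F : ι → ℝ} {G : κ → ℝ}
    (v : κ → ι) (hF : 0 ≤ F) (hsupp : Function.support F ⊆ Set.range v)
    (hFG : ∀ k, F (v k) ≤ G k) (hG : Summable G) : Summable F ∧ ∑' i, F i ≤ ∑' k, G k := by
  choose s hs using fun i : Function.support F => hsupp i.2
  have hinj : Function.Injective s := fun i j hij => Subtype.ext (by rw [← hs i, ← hs j, hij])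
  have hle (i : Function.support F) : F i ≤ G (s i) := hs i ▸ hFG (s i)
  have hsub : Summable fun i : Function.support F => F i :=
    (hG.comp_injective hinj).of_nonneg_of_le (fun i => hF i) hle
  refine ⟨?_, ?_⟩
  · rw [← Set.indicator_support (f := F)]
    exact summable_subtype_iff_indicator.1 hsub
  · calc ∑' i, F i = ∑' i : Function.support F, F i :=
          (tsum_subtype_eq_of_support_subset le_rfl).symm
      _ ≤ ∑' i, G (s i) := hsub.tsum_le_tsum hle (hG.comp_injective hinj)
      _ ≤ ∑' k, G k := tsum_comp_le_tsum_of_inj hG (fun k => (hF _).trans (hFG k)) hinj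

theorem summable_and_tsum_abs_ofExponents_phiRatioJump_mul_min_le {x : ℝ} (hx : 0 ≤ x) :
    Summable (fun d : ℕ => |ofExponents phiRatioJump d| * min 1 (x / d)) ∧
      ∑' d : ℕ, |ofExponents phiRatioJump d| * min 1 (x / d) ≤
        3 * x ^ (1 / 4 : ℝ) * ∑' w, (fourFullCore w : ℝ) ^ (-(1 / 4 : ℝ)) := by
  refine (summable_and_tsum_le_of_support_subset_range (fun q => q.2 ^ 4 * fourFullCore q.1)
    (fun d => by positivity) ?_ (fun q => ?_)
    (summable_min_one_div_pow_four_mul_fourFullCore hx)).imp_right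
    fun h => h.trans (tsum_min_one_div_pow_four_mul_fourFullCore_le hx)
  · intro d hd
    have hd : ofExponents phiRatioJump d ≠ 0 := abs_ne_zero.1 (left_ne_zero_of_mul hd)
    obtain ⟨a, w, had⟩ := exists_pow_four_mul_fourFullCore_eq
      (four_le_factorization_of_ofExponents_phiRatioJump_ne_zero hd)
    exact ⟨(w, a), had⟩
  · exact mul_le_of_le_one_left (le_min zero_le_one (by positivity))
      (abs_ofExponents_phiRatioJump_le_one _)

theorem summable_ofExponents_phiRatioJump_div :
    Summable fun d : ℕ => ofExponents phiRatioJump d / d := by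
  refine (summable_and_tsum_abs_ofExponents_phiRatioJump_mul_min_le zero_le_one).1.of_norm_bounded
    fun d => ?_
  rcases eq_or_ne d 0 with rfl | hd
  · simp
  have : (1 : ℝ) / d ≤ 1 := div_le_one_of_le₀ (mod_cast Nat.one_le_iff_ne_zero.2 hd) (by positivity)
  rw [min_eq_right this, Real.norm_eq_abs, abs_div, Nat.abs_cast, mul_one_div]

theorem sum_Icc_phiE_div_phiEStar_eq_tsum (x : ℝ) :
    ∑ n ∈ Icc 1 ⌊x⌋₊, (phiE n : ℝ) / phiEStar n =
      ∑' d : ℕ, ofExponents phiRatioJump d * ⌊x / d⌋₊ := by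
  simp_rw [Nat.floor_div_natCast]
  rw [tsum_eq_sum (s := Ioc 0 ⌊x⌋₊), ← sum_Ioc_mul_zeta_eq_sum, ofExponents_phiRatioJump_mul_zeta]
  · exact sum_congr rfl fun n hn => (ofExponents_phiRatio_apply (mem_Ioc.1 hn).1.ne').symm
  intro d hd
  rcases eq_or_ne d 0 with rfl | hd0
  · simp
  simp only [mem_Ioc, not_and, not_le] at hd
  rw [Nat.div_eq_of_lt (hd (Nat.pos_of_ne_zero hd0)), Nat.cast_zero, mul_zero]

theorem tsum_ofExponents_phiRatioJump_div_prime_pow {p : ℕ} (hp : p.Prime) :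
    ∑' e : ℕ, ofExponents phiRatioJump (p ^ e) / ((p ^ e : ℕ) : ℝ) =
      1 + ∑' a : ℕ, (phiRatio (a + 4) - phiRatio (a + 3)) / (p : ℝ) ^ (a + 4) := by
  have hs : Summable fun e : ℕ => ofExponents phiRatioJump (p ^ e) / ((p ^ e : ℕ) : ℝ) :=
    summable_ofExponents_phiRatioJump_div.comp_injective (Nat.pow_right_injective hp.two_le)
  rw [← Summable.sum_add_tsum_nat_add 4 hs]
  congr 1
  · have hj {i : ℕ} (hi : i ≠ 0) (hi4 : i < 4) : ofExponents phiRatioJump (p ^ i) = 0 := by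
      rw [ofExponents_apply_prime_pow _ hp hi, phiRatioJump, if_pos hi4]
    rw [sum_range_succ, sum_range_succ, sum_range_succ, sum_range_one, hj one_ne_zero (by norm_num),
      hj two_ne_zero (by norm_num), hj three_ne_zero (by norm_num), pow_zero,
      (isMultiplicative_ofExponents _).map_one]
    simp
  · refine tsum_congr fun a => ?_
    rw [ofExponents_apply_prime_pow _ hp (by omega), phiRatioJump, if_neg (by omega)]
    push_cast
    rfl

theorem tprod_primes_eq_tsum_ofExponents_phiRatioJump_div :
    ∏' p : Nat.Primes,
        (1 + ∑' a : ℕ, (phiRatio (a + 4) - phiRatio (a + 3)) / ((p : ℕ) : ℝ) ^ (a + 4)) =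
      ∑' d : ℕ, ofExponents phiRatioJump d / d := by
  have hg := (isMultiplicative_ofExponents phiRatioJump).pdiv
    (isMultiplicative_id.natCast (R := ℝ))
  have hsum : Summable
      (‖(ofExponents phiRatioJump).pdiv (ArithmeticFunction.id : ArithmeticFunction ℝ) ·‖) := by
    simpa [pdiv_apply] using summable_ofExponents_phiRatioJump_div.norm
  convert hg.eulerProduct_tprod hsum using 1
  · exact tprod_congr fun p => by
      rw [← tsum_ofExponents_phiRatioJump_div_prime_pow p.prop]
      simp [pdiv_apply]
  · simp [pdiv_apply]

theorem abs_sum_Icc_phiE_div_phiEStar_sub_le {x : ℝ} (hx : 0 ≤ x) :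
    |∑ n ∈ Icc 1 ⌊x⌋₊, (phiE n : ℝ) / phiEStar n - x * ∑' d : ℕ, ofExponents phiRatioJump d / d| ≤
      3 * x ^ (1 / 4 : ℝ) * ∑' w, (fourFullCore w : ℝ) ^ (-(1 / 4 : ℝ)) := by
  obtain ⟨hsum, hle⟩ := summable_and_tsum_abs_ofExponents_phiRatioJump_mul_min_le hx
  set u : ℕ → ℝ := fun d => ofExponents phiRatioJump d * (⌊x / d⌋₊ - x / d)
  have hu : ∀ d, ‖u d‖ ≤ |ofExponents phiRatioJump d| * min 1 (x / d) := fun d => by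
    rw [Real.norm_eq_abs, abs_mul]
    exact mul_le_mul_of_nonneg_left (abs_natFloor_sub_le_min (by positivity)) (abs_nonneg _)
  have hsplit : ∑' d : ℕ, ofExponents phiRatioJump d * ⌊x / d⌋₊ =
      ∑' d, u d + x * ∑' d : ℕ, ofExponents phiRatioJump d / d := by
    rw [← tsum_mul_left, ← (hsum.of_norm_bounded hu).tsum_add
      (summable_ofExponents_phiRatioJump_div.mul_left x)]
    exact tsum_congr fun d => by simp only [u]; ring
  rw [sum_Icc_phiE_div_phiEStar_eq_tsum, hsplit, add_sub_cancel_right]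
  exact (tsum_of_norm_bounded hsum.hasSum hu).trans hle

/-- `Σ_{n ≤ x} φ^{(e)}(n)/φ^{(e)*}(n)
  = x ∏_p (1 + Σ_{a≥4} (φ(a)/φ*(a) - φ(a-1)/φ*(a-1))/p^a) + O(x^{1/4} log x)`. -/
theorem phiE_div_phiEStar_partial_sums :
    (fun x : ℝ =>
        (∑ n ∈ Finset.Icc 1 ⌊x⌋₊, (phiE n : ℝ) / (phiEStar n : ℝ)) -
          x * ∏' p : Nat.Primes,
            (1 + ∑' a : ℕ,
              ((Nat.totient (a + 4) : ℝ) / (phiStar (a + 4) : ℝ) -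
                  (Nat.totient (a + 3) : ℝ) / (phiStar (a + 3) : ℝ)) /
                ((p : ℕ) : ℝ) ^ (a + 4)))
      =O[Filter.atTop] (fun x : ℝ => x ^ ((1 : ℝ) / 4) * Real.log x) := by
  simp only [← phiRatio.eq_1, tprod_primes_eq_tsum_ofExponents_phiRatioJump_div]
  have hlog : (fun x : ℝ => x ^ ((1 : ℝ) / 4)) =O[Filter.atTop]
      fun x : ℝ => x ^ ((1 : ℝ) / 4) * Real.log x := by
    simpa using (Asymptotics.isBigO_refl (fun x : ℝ => x ^ ((1 : ℝ) / 4)) Filter.atTop).mul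
      (Real.isLittleO_const_log_atTop (c := 1)).isBigO
  refine (Asymptotics.IsBigO.of_bound
    (3 * ∑' w, (fourFullCore w : ℝ) ^ (-(1 / 4 : ℝ))) ?_).trans hlog
  filter_upwards [Filter.eventually_ge_atTop 0] with x hx
  rw [Real.norm_eq_abs, Real.norm_of_nonneg (by positivity)]
  exact (abs_sum_Icc_phiE_div_phiEStar_sub_le hx).trans_eq (by ring)
end

section
/- Let n = p_1^{a_1} ··· p_r^{a_r} > 1 with distinct primes p_i. The number of unitary e-divisors of n (divisors d of n such that d and n/d are exponentially coprime) equals φ(a_1) ··· φ(a_r) if n is squarefull (all a_i ≥ 2), and equals 0 if n is not squarefull, where φ is Euler's totient function. -/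
open scoped Classical BigOperators

/-- `d` is a unitary e-divisor of `n`: `d ∣ n`, and `d` and `n/d` are exponentially
coprime, i.e. `d` and `n/d` have the same prime factors as `n` and at each prime the
exponents `b`, `a - b` of `d`, `n/d` satisfy `gcd (b, a - b) = 1`. -/
def IsUnitaryExpDivisor (d n : ℕ) : Prop :=
  d ∣ n ∧ d.primeFactors = n.primeFactors ∧ (n / d).primeFactors = n.primeFactors ∧
    ∀ p ∈ n.primeFactors,
      Nat.gcd (d.factorization p) (n.factorization p - d.factorization p) = 1

/-!
A divisor `d` of `n` is determined by its exponents `b_p`, and `d` is a unitary e-divisor of `n`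
exactly when, prime by prime, `0 < b_p < a_p` and `gcd (b_p, a_p) = 1` (for `b ≤ a`,
`gcd (b, a - b) = gcd (b, a)`). The exponents can be chosen independently, so the count is
`∏ p, #{b ∈ [1, a_p) | gcd (b, a_p) = 1}`, and the factor at `p` is `φ (a_p)` when `a_p ≥ 2`
but `0` when `a_p = 1`, since then `[1, a_p)` is empty while `φ 1 = 1`.
-/

open Finset Nat

def coprimeExponents (a : ℕ) : Finset ℕ := {b ∈ Ico 1 a | b.Coprime a}

theorem card_coprimeExponents (a : ℕ) :
    #(coprimeExponents a) = if 2 ≤ a then φ a else 0 := by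
  split_ifs with ha
  · rw [totient_eq_card_coprime]
    congr 1
    ext b
    simp only [coprimeExponents, mem_filter, mem_Ico, mem_range, coprime_comm (m := a)]
    refine ⟨fun ⟨⟨_, hba⟩, hcop⟩ => ⟨hba, hcop⟩, fun ⟨hba, hcop⟩ => ⟨⟨?_, hba⟩, hcop⟩⟩
    rcases b with _ | b
    · rw [coprime_zero_right] at hcop
      omega
    · omega
  · rw [Finset.card_eq_zero, coprimeExponents, filter_eq_empty_iff]
    intro b hb
    rw [mem_Ico] at hb
    omega

theorem primeFactors_eq_and_primeFactors_div_eq_iff {d n : ℕ} (hn : n ≠ 0) (hdvd : d ∣ n) :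
    d.primeFactors = n.primeFactors ∧ (n / d).primeFactors = n.primeFactors ↔
      ∀ p ∈ n.primeFactors, 0 < d.factorization p ∧ d.factorization p < n.factorization p := by
  have hle := (factorization_le_iff_dvd (ne_zero_of_dvd_ne_zero hn hdvd) hn).2 hdvd
  simp only [← support_factorization, factorization_div hdvd, Finset.ext_iff,
    Finsupp.mem_support_iff, Finsupp.tsub_apply]
  constructor
  · rintro ⟨hd, hdiv⟩ p hp
    have := hd p
    have := hdiv p
    omega
  · intro h
    refine ⟨fun p => ?_, fun p => ?_⟩ <;>
    · have := h p
      have := hle p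
      omega

theorem isUnitaryExpDivisor_iff {d n : ℕ} (hd : d ≠ 0) (hn : n ≠ 0) :
    IsUnitaryExpDivisor d n ↔
      d.factorization ∈ n.primeFactors.finsupp fun p => coprimeExponents (n.factorization p) := by
  simp only [mem_finsupp_iff, coprimeExponents, mem_filter, mem_Ico, support_factorization]
  constructor
  · rintro ⟨hdvd, hpf, hpf_div, hgcd⟩
    have hexp := (primeFactors_eq_and_primeFactors_div_eq_iff hn hdvd).1 ⟨hpf, hpf_div⟩
    refine ⟨hpf.subset, fun p hp => ⟨hexp p hp, ?_⟩⟩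
    exact (coprime_sub_self_right (hexp p hp).2.le).1 (hgcd p hp)
  · rintro ⟨hsupp, hexp⟩
    have hdvd : d ∣ n := by
      rw [← factorization_le_iff_dvd hd hn]
      intro p
      by_cases hp : p ∈ n.primeFactors
      · exact (hexp p hp).1.2.le
      · have hpd : p ∉ d.primeFactors := fun h => hp (hsupp h)
        rw [← support_factorization, Finsupp.notMem_support_iff] at hpd
        omega
    obtain ⟨hpf, hpf_div⟩ := (primeFactors_eq_and_primeFactors_div_eq_iff hn hdvd).2
      fun p hp => (hexp p hp).1
    exact ⟨hdvd, hpf, hpf_div,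
      fun p hp => (coprime_sub_self_right (hexp p hp).1.2.le).2 (hexp p hp).2⟩

theorem card_filter_isUnitaryExpDivisor {n : ℕ} (hn : n ≠ 0) :
    #{d ∈ n.divisors | IsUnitaryExpDivisor d n} =
      ∏ p ∈ n.primeFactors, #(coprimeExponents (n.factorization p)) := by
  rw [← card_finsupp]
  refine card_bij (fun d _ => d.factorization) (fun d hd => ?_) (fun d₁ hd₁ d₂ hd₂ h => ?_) ?_
  · rw [mem_filter, mem_divisors] at hd
    exact (isUnitaryExpDivisor_iff (ne_zero_of_dvd_ne_zero hn hd.1.1) hn).1 hd.2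
  · exact factorization_inj (pos_of_mem_divisors (mem_filter.1 hd₁).1).ne'
      (pos_of_mem_divisors (mem_filter.1 hd₂).1).ne' h
  · intro f hf
    have hprime : ∀ p ∈ f.support, p.Prime :=
      fun p hp => prime_of_mem_primeFactors ((mem_finsupp_iff.1 hf).1 hp)
    have hfact := prod_pow_factorization_eq_self hprime
    have hd : f.prod (· ^ ·) ≠ 0 :=
      Finset.prod_ne_zero_iff.2 fun p hp => pow_ne_zero _ (hprime p hp).ne_zero
    have hunit := (isUnitaryExpDivisor_iff hd hn).2 (by rwa [hfact])
    exact ⟨f.prod (· ^ ·), mem_filter.2 ⟨mem_divisors.2 ⟨hunit.1, hn⟩, hunit⟩, hfact⟩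

/-- The number of unitary e-divisors of `n > 1` is `φ(a_1) ⋯ φ(a_r)` if `n` is
squarefull, and `0` otherwise. -/
theorem card_unitary_exp_divisors :
    ∀ n : ℕ, 1 < n →
      (n.divisors.filter (fun d => IsUnitaryExpDivisor d n)).card =
        if ∀ p ∈ n.primeFactors, 2 ≤ n.factorization p
        then ∏ p ∈ n.primeFactors, Nat.totient (n.factorization p)
        else 0 := by
  intro n hn
  rw [card_filter_isUnitaryExpDivisor (by omega)]
  simp_rw [card_coprimeExponents]
  exact prod_ite_zero
end
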